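/- Let I = {i₁ < ⋯ < i_r} ⊆ {1, …, 2g+1}. Then in the Clifford algebra C(V): (1) (ε_{i₁}·ε_{i₂}·⋯·ε_{i_r})² = δ_I²·r_{I,I^c}, an equality of scalars in k ⊆ C(V); (2) (ε_{i₁}·⋯·ε_{i_r})·τ(ε_{i₁}·⋯·ε_{i_r}) = ∏_{j=1}^r f'(ω_{i_j}), where τ is the reversal anti-involution of C(V) and f' is the derivative of f. -/

import Mathlib

/-! In `V = k[x]/(f)` the `ε_i` are orthogonal up to scale: `ε_i ε_j = 0` for `i ≠ j` and
`ε_i² = f'(ω_i) ε_i`, while `τ(ε_i) = 1` since `ε_i` is the image of a monic polynomial of degree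
`2g`. So the `ε_i` are pairwise `ψ`-orthogonal with `ψ(ε_i, ε_i) = f'(ω_i)`, and in `C(V)` they
anticommute and square to `f'(ω_i)`. For their product `e` this gives `e τ(e) = ∏ f'(ω_i)` and
`τ(e) = (-1)^(r choose 2) e`. Finally, splitting `f'(ω_i) = ∏_{j ≠ i} (ω_i - ω_j)` over `j ∈ I`
and `j ∉ I`, the product over `j ∈ I` contributes `(-1)^(r choose 2) δ_I²`. -/

open Polynomial CliffordAlgebra

namespace CliffordAlgebra

variable {R M : Type*} [CommRing R] [AddCommGroup M] [Module R M] {Q : QuadraticForm R M}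

theorem prod_map_ι_mul_reverse :
    ∀ l : List M, (l.map (ι Q)).prod * reverse (l.map (ι Q)).prod =
      algebraMap R _ (l.map Q).prod
  | [] => by simp
  | a :: l => by
    rw [List.map_cons, List.prod_cons, reverse.map_mul, reverse_ι, mul_assoc,
      ← mul_assoc _ (reverse _), prod_map_ι_mul_reverse l, Algebra.left_comm, ι_sq_scalar,
      ← map_mul, List.map_cons, List.prod_cons, mul_comm]

theorem prod_map_ι_mul_ι_of_isOrtho {a : M} :
    ∀ {l : List M}, (∀ b ∈ l, Q.IsOrtho a b) →
      (l.map (ι Q)).prod * ι Q a = (-1 : R) ^ l.length • (ι Q a * (l.map (ι Q)).prod)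
  | [], _ => by simp
  | b :: l, h => by
    rw [List.map_cons, List.prod_cons, mul_assoc,
      prod_map_ι_mul_ι_of_isOrtho fun c hc => h c (List.mem_cons_of_mem b hc), mul_smul_comm,
      ← mul_assoc, ι_mul_ι_comm_of_isOrtho (h b List.mem_cons_self).symm, neg_mul, smul_neg,
      List.length_cons, pow_succ, mul_neg_one, neg_smul, mul_assoc]

theorem reverse_prod_map_ι_of_pairwise_isOrtho :
    ∀ {l : List M}, l.Pairwise Q.IsOrtho →
      reverse (l.map (ι Q)).prod = (-1 : R) ^ l.length.choose 2 • (l.map (ι Q)).prod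
  | [], _ => by simp
  | a :: l, h => by
    obtain ⟨ha, hl⟩ := List.pairwise_cons.mp h
    rw [List.map_cons, List.prod_cons, reverse.map_mul, reverse_ι,
      reverse_prod_map_ι_of_pairwise_isOrtho hl, smul_mul_assoc, prod_map_ι_mul_ι_of_isOrtho ha,
      smul_smul, ← pow_add, List.length_cons, Nat.choose_succ_succ', Nat.choose_one_right,
      add_comm]

theorem prod_map_ι_sq_of_pairwise_isOrtho {l : List M} (h : l.Pairwise Q.IsOrtho) :
    (l.map (ι Q)).prod ^ 2 = algebraMap R _ ((-1) ^ l.length.choose 2 * (l.map Q).prod) := by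
  rw [map_mul, ← Algebra.smul_def, ← prod_map_ι_mul_reverse,
    reverse_prod_map_ι_of_pairwise_isOrtho h, mul_smul_comm, smul_smul, ← pow_add, ← two_mul,
    pow_mul, neg_one_sq, one_pow, one_smul, sq]

end CliffordAlgebra

namespace Finset

theorem prod_map_sort {α M : Type*} [CommMonoid M] (s : Finset α) (r : α → α → Prop)
    [DecidableRel r] [IsTrans α r] [Std.Antisymm r] [Std.Total r] (f : α → M) :
    ((s.sort r).map f).prod = ∏ a ∈ s, f a := by
  rw [prod_eq_multiset_prod, ← sort_eq s r, Multiset.map_coe, Multiset.prod_coe]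

theorem prod_prod_univ_erase_eq_mul_prod_prod_compl {ι M : Type*} [Fintype ι] [DecidableEq ι]
    [CommMonoid M] (s : Finset ι) (f : ι → ι → M) :
    ∏ i ∈ s, ∏ j ∈ univ.erase i, f i j =
      (∏ i ∈ s, ∏ j ∈ s.erase i, f i j) * ∏ i ∈ s, ∏ j ∈ sᶜ, f i j := by
  rw [← prod_mul_distrib]
  refine prod_congr rfl fun i hi => ?_
  rw [← sdiff_union_erase_cancel (subset_univ s) hi, ← compl_eq_univ_sdiff,
    prod_union (disjoint_of_subset_right (erase_subset i s) disjoint_compl_left), mul_comm]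

theorem neg_one_pow_choose_two_mul_prod_prod_erase_sub {R ι : Type*} [CommRing R]
    [LinearOrder ι] (s : Finset ι) (v : ι → R) :
    (-1) ^ s.card.choose 2 * ∏ i ∈ s, ∏ j ∈ s.erase i, (v i - v j) =
      (∏ a ∈ s, ∏ b ∈ s, if a < b then v b - v a else 1) ^ 2 := by
  induction s using Finset.induction_on_max with
  | empty => simp
  | insert m s hlt ih =>
    have hm : m ∉ s := fun h => lt_irrefl m (hlt m h)
    set A := ∏ j ∈ s, (v m - v j)
    have hdelta : (∏ a ∈ insert m s, ∏ b ∈ insert m s, if a < b then v b - v a else 1) =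
        A * ∏ a ∈ s, ∏ b ∈ s, if a < b then v b - v a else 1 := by
      rw [prod_insert hm, prod_eq_one fun b hb => if_neg ?_, one_mul, ← prod_mul_distrib]
      · refine prod_congr rfl fun a ha => ?_
        rw [prod_insert hm, if_pos (hlt a ha)]
      · rcases mem_insert.1 hb with rfl | hb
        exacts [lt_irrefl b, (hlt b hb).not_gt]
    have hprod : ∏ i ∈ insert m s, ∏ j ∈ (insert m s).erase i, (v i - v j) =
        A * ((-1) ^ s.card * A) * ∏ i ∈ s, ∏ j ∈ s.erase i, (v i - v j) := by
      have hrow : ∀ i ∈ s, ∏ j ∈ (insert m s).erase i, (v i - v j) =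
          -(v m - v i) * ∏ j ∈ s.erase i, (v i - v j) := fun i hi => by
        rw [erase_insert_of_ne (hlt i hi).ne', prod_insert (fun h => hm (mem_of_mem_erase h)),
          neg_sub]
      rw [prod_insert hm, erase_insert hm, prod_congr rfl hrow, prod_mul_distrib, prod_neg]
      ring
    rw [hdelta, hprod, card_insert_of_notMem hm, Nat.choose_succ_succ', Nat.choose_one_right,
      mul_pow, ← ih, pow_add]
    have hsign : ((-1 : R) ^ s.card) ^ 2 = 1 := by rw [← pow_mul, pow_mul', neg_one_sq, one_pow]
    linear_combination
      (A ^ 2 * (-1) ^ s.card.choose 2 * ∏ i ∈ s, ∏ j ∈ s.erase i, (v i - v j)) * hsign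

end Finset

namespace Lagrange

variable {R ι : Type*} [CommRing R] {v : ι → R}

theorem mk_nodal (f : R[X]) (t : Finset ι) :
    AdjoinRoot.mk f (nodal t v) = ∏ j ∈ t, (AdjoinRoot.root f - algebraMap R _ (v j)) := by
  rw [nodal_eq, map_prod]
  refine Finset.prod_congr rfl fun j _ => ?_
  rw [map_sub, AdjoinRoot.mk_X, AdjoinRoot.mk_C]
  rfl

variable [DecidableEq ι] {s : Finset ι} {i j : ι}

theorem mk_nodal_erase_mul_mk_nodal_erase_of_ne (hj : j ∈ s) (hij : i ≠ j) :
    AdjoinRoot.mk (nodal s v) (nodal (s.erase i) v) *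
      AdjoinRoot.mk (nodal s v) (nodal (s.erase j) v) = 0 := by
  rw [← map_mul, AdjoinRoot.mk_eq_zero,
    nodal_eq_mul_nodal_erase (Finset.mem_erase.2 ⟨hij.symm, hj⟩), nodal_eq_mul_nodal_erase hj]
  exact ⟨nodal ((s.erase i).erase j) v, by ring⟩

theorem mk_nodal_erase_mul_self (hi : i ∈ s) :
    AdjoinRoot.mk (nodal s v) (nodal (s.erase i) v) *
      AdjoinRoot.mk (nodal s v) (nodal (s.erase i) v) =
    (nodal (s.erase i) v).eval (v i) • AdjoinRoot.mk (nodal s v) (nodal (s.erase i) v) := by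
  rw [Algebra.smul_def, AdjoinRoot.algebraMap_eq, ← AdjoinRoot.mk_C, ← sub_eq_zero, ← sub_mul,
    ← map_sub, ← map_mul, AdjoinRoot.mk_eq_zero, nodal_eq_mul_nodal_erase hi]
  exact mul_dvd_mul X_sub_C_dvd_sub_C_eval dvd_rfl

end Lagrange

theorem AdjoinRoot.apply_mk_of_natDegree_le {R : Type*} [CommRing R] {f : R[X]} {n : ℕ}
    (τ : AdjoinRoot f →ₗ[R] R)
    (hτ : ∀ a : Fin (n + 1) → R, τ (∑ i, a i • root f ^ (i : ℕ)) = a (Fin.last n))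
    {p : R[X]} (hp : p.natDegree ≤ n) : τ (mk f p) = p.coeff n := by
  rw [← aeval_eq, aeval_eq_sum_range' (Nat.lt_succ_of_le hp),
    ← Fin.sum_univ_eq_sum_range (fun i => p.coeff i • root f ^ i)]
  exact hτ fun i => p.coeff i

open Finset Lagrange in
/-- Let `I = {i₁ < ⋯ < i_r} ⊆ {1, …, 2g+1}`.  Then in the Clifford algebra `C(V)`:
(1) `(ε_{i₁}⋯ε_{i_r})² = δ_I²·r_{I,Iᶜ}` (a scalar), where
`δ_I = ∏_{j<k}(ω_{i_k} − ω_{i_j})` and `r_{I,Iᶜ} = ∏_{i∈I, j∉I}(ω_i − ω_j)`;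
(2) `(ε_{i₁}⋯ε_{i_r})·τ(ε_{i₁}⋯ε_{i_r}) = ∏_{j=1}^r f'(ω_{i_j})`, where `τ` is the
reversal anti-involution of `C(V)`. -/
theorem stmt_15
    (k : Type*) [Field k]
    (g : ℕ)
    (ω : Fin (2 * g + 1) → k)
    (f : Polynomial k) (hf : f = ∏ m : Fin (2 * g + 1), (X - C (ω m)))
    -- `τQ` picks out the coefficient of `x^{2g}`, and `ψ(a,b) = τQ(ab)`:
    (τQ : AdjoinRoot f →ₗ[k] k)
    (hτQ : ∀ a : Fin (2 * g + 1) → k,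
      τQ (∑ i : Fin (2 * g + 1), a i • AdjoinRoot.root f ^ (i : ℕ)) = a ⟨2 * g, by omega⟩)
    (Q : QuadraticForm k (AdjoinRoot f)) (hQ : ∀ v : AdjoinRoot f, Q v = τQ (v * v))
    -- the elements `ε_i = ∏_{j ≠ i}(x − ω_j)`:
    (ε : Fin (2 * g + 1) → AdjoinRoot f)
    (hε : ∀ i, ε i = ∏ j ∈ Finset.univ.erase i,
      (AdjoinRoot.root f - algebraMap k (AdjoinRoot f) (ω j))) :
    ∀ I : Finset (Fin (2 * g + 1)),
      -- (1):
      (((I.sort (· ≤ ·)).map fun i => ι Q (ε i)).prod ^ 2 =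
        algebraMap k (CliffordAlgebra Q)
          ((∏ a ∈ I, ∏ b ∈ I, if a < b then ω b - ω a else 1) ^ 2 *
            ∏ a ∈ I, ∏ b ∈ Iᶜ, (ω a - ω b))) ∧
      -- (2):
      (((I.sort (· ≤ ·)).map fun i => ι Q (ε i)).prod *
          reverse (((I.sort (· ≤ ·)).map fun i => ι Q (ε i)).prod) =
        algebraMap k (CliffordAlgebra Q)
          (∏ i ∈ I, Polynomial.eval (ω i) (Polynomial.derivative f))) := by
  intro I
  obtain rfl : f = nodal univ ω := hf.trans (nodal_eq _ _).symm
  have hε_mk : ∀ i, ε i = AdjoinRoot.mk _ (nodal (univ.erase i) ω) := fun i =>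
    (hε i).trans (mk_nodal _ _).symm
  have hτε : ∀ i, τQ (ε i) = 1 := fun i => by
    rw [hε_mk, AdjoinRoot.apply_mk_of_natDegree_le τQ hτQ (by simp [natDegree_nodal]),
      ← (nodal_monic (s := univ.erase i) (v := ω)).coeff_natDegree]
    simp [natDegree_nodal]
  have hQε : ∀ i, Q (ε i) = (nodal (univ.erase i) ω).eval (ω i) := fun i => by
    rw [hQ, hε_mk, mk_nodal_erase_mul_self (mem_univ i), map_smul, ← hε_mk, hτε, smul_eq_mul,
      mul_one]
  have hortho : ∀ i j, i ≠ j → Q.IsOrtho (ε i) (ε j) := fun i j hij => by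
    rw [QuadraticMap.isOrtho_def, hQ, hQ, hQ, add_mul, mul_add, mul_add, hε_mk i, hε_mk j,
      mk_nodal_erase_mul_mk_nodal_erase_of_ne (mem_univ j) hij,
      mk_nodal_erase_mul_mk_nodal_erase_of_ne (mem_univ i) hij.symm, add_zero, zero_add, map_add]
  have hpair : ((I.sort (· ≤ ·)).map ε).Pairwise Q.IsOrtho :=
    List.pairwise_map.2 ((I.sort_nodup _).imp (hortho _ _))
  have hprodQ : (((I.sort (· ≤ ·)).map ε).map Q).prod =
      ∏ i ∈ I, ∏ j ∈ univ.erase i, (ω i - ω j) := by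
    simp only [List.map_map, prod_map_sort, Function.comp_apply, hQε, eval_nodal]
  have hmap : (I.sort (· ≤ ·)).map (fun i => ι Q (ε i)) = ((I.sort (· ≤ ·)).map ε).map (ι Q) :=
    (List.map_map ..).symm
  rw [hmap]
  refine ⟨?_, ?_⟩
  · rw [prod_map_ι_sq_of_pairwise_isOrtho hpair, hprodQ, List.length_map, length_sort,
      prod_prod_univ_erase_eq_mul_prod_prod_compl, ← mul_assoc,
      neg_one_pow_choose_two_mul_prod_prod_erase_sub]
  · rw [prod_map_ι_mul_reverse, hprodQ]
    simp only [eval_nodal_derivative_eval_node_eq (mem_univ _), eval_nodal]
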